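/- An hypersemigroup H is left quasi-regular if and only if every left ideal L of H satisfies L*L = L. -/
import Mathlib


variable {H : Type*}

/-- Subset product induced by a hyperoperation. -/
def hprod (m : H → H → Set H) (A B : Set H) : Set H :=
  ⋃ a ∈ A, ⋃ b ∈ B, m a b

lemma mem_hprod {m : H → H → Set H} {A B : Set H} {x : H} :
    x ∈ hprod m A B ↔ ∃ a ∈ A, ∃ b ∈ B, x ∈ m a b := by
  simp [hprod]

lemma hprod_mono {m : H → H → Set H} {A A' B B' : Set H}
    (hA : A ⊆ A') (hB : B ⊆ B') : hprod m A B ⊆ hprod m A' B' := by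
  intro x hx
  rcases mem_hprod.mp hx with ⟨a, ha, b, hb, hx⟩
  exact mem_hprod.mpr ⟨a, hA ha, b, hB hb, hx⟩

theorem stmt16 (m : H → H → Set H)
    (hne : ∀ a b : H, (m a b).Nonempty)
    (hassoc : ∀ A B C : Set H,
      hprod m (hprod m A B) C = hprod m A (hprod m B C)) :
    (∀ a : H, a ∈ hprod m (hprod m (hprod m Set.univ {a}) Set.univ) {a}) ↔
    (∀ L : Set H, L.Nonempty → hprod m Set.univ L ⊆ L → hprod m L L = L) := by
  constructor
  · intro hq L hLne hL
    apply Set.Subset.antisymm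
    · exact (hprod_mono (Set.subset_univ L) (Set.Subset.refl L)).trans hL
    · intro a ha
      have h1 := hq a
      rw [hassoc, hassoc] at h1
      have hHa : hprod m Set.univ {a} ⊆ L :=
        (hprod_mono (Set.Subset.refl _) (Set.singleton_subset_iff.mpr ha)).trans hL
      have h2 : hprod m (hprod m Set.univ {a}) (hprod m Set.univ {a}) ⊆ hprod m L L :=
        hprod_mono hHa hHa
      have := hq a
      rw [hassoc] at this
      exact h2 this
  · intro hid a
    have hideal : hprod m Set.univ (hprod m Set.univ {a}) ⊆ hprod m Set.univ {a} := by
      rw [← hassoc]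
      exact hprod_mono (Set.subset_univ _) (Set.Subset.refl _)
    have hkey : hprod m Set.univ ({a} ∪ hprod m Set.univ {a}) ⊆
        hprod m Set.univ {a} := by
      intro x hx
      rcases mem_hprod.mp hx with ⟨h, -, b, hb, hx⟩
      rcases hb with hb | hb
      · exact mem_hprod.mpr ⟨h, trivial, b, hb, hx⟩
      · exact hideal (mem_hprod.mpr ⟨h, trivial, b, hb, hx⟩)
    have hLL := hid _ ⟨a, Or.inl rfl⟩ (hkey.trans Set.subset_union_right)
    have haHa : a ∈ hprod m Set.univ {a} := by
      have h3 := hLL.ge (Or.inl rfl)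
      exact hkey (hprod_mono (Set.subset_univ _) (Set.Subset.refl _) h3)
    have hHaHa := hid (hprod m Set.univ {a}) ⟨a, haHa⟩ hideal
    rw [hassoc, hHaHa]
    exact haHa
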